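/- arXiv:1705.03709 — 2 statements merged into one kernel-verified Lean document; each statement's English description precedes it below -/
import Mathlib

section
/- For d ≡ 3 (mod 4), the number of tuples (a_0,...,a_{d-1}) ∈ {1,-1}^d such that both 1 and -1 are roots of x^d + a_{d-1}x^{d-1} + ... + a_0 equals C((d+1)/2, (d+1)/4) · C((d-1)/2, (d+1)/4). -/
/-!
Encode a sign tuple `a` by the set `S` of indices with `a i = 1`. For odd `d`,
`p(1) = 1 + Σ_even a_i + Σ_odd a_i` and `p(-1) = -1 + Σ_even a_i - Σ_odd a_i`, so both vanish
iff the signs at even indices sum to `0` and those at odd indices sum to `-1`. For `d = 4k+3`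
this says `S` contains `k+1` of the `2k+2` even indices and `k` of the `2k+1` odd ones, chosen
independently; finally `C(2k+1, k) = C(2k+1, k+1)`.
-/

open Polynomial Finset

section SignVectors

variable {ι : Type*} [DecidableEq ι]

def signVec (S : Finset ι) (i : ι) : ℤ := if i ∈ S then 1 else -1

theorem signVec_injective : Function.Injective (signVec : Finset ι → ι → ℤ) := by
  intro S T h
  ext i
  have := congrFun h i
  unfold signVec at this
  split_ifs at this <;> simp_all

theorem range_signVec [Fintype ι] :
    Set.range (signVec : Finset ι → ι → ℤ) = {a | ∀ i, a i = 1 ∨ a i = -1} := by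
  ext a
  constructor
  · rintro ⟨S, rfl⟩ i
    unfold signVec
    split_ifs <;> simp
  · intro ha
    refine ⟨({i | a i = 1} : Finset ι), funext fun i => ?_⟩
    rcases ha i with h | h <;> simp [signVec, h]

theorem ncard_setOf_pm_one_and [Fintype ι] (P : (ι → ℤ) → Prop) :
    Set.ncard {a | (∀ i, a i = 1 ∨ a i = -1) ∧ P a} =
      Set.ncard {S : Finset ι | P (signVec S)} := by
  rw [← Set.ncard_image_of_injective _ signVec_injective]
  congr 1
  ext a
  constructor
  · rintro ⟨ha, hP⟩
    obtain ⟨S, rfl⟩ : a ∈ Set.range signVec := range_signVec (ι := ι) ▸ ha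
    exact ⟨S, hP, rfl⟩
  · rintro ⟨S, hP, rfl⟩
    exact ⟨range_signVec.subset ⟨S, rfl⟩, hP⟩

theorem sum_signVec (F S : Finset ι) : ∑ i ∈ F, signVec S i = 2 * #(S ∩ F) - #F := by
  have := card_filter_add_card_filter_not (s := F) (· ∈ S)
  simp only [signVec, sum_ite, sum_const, nsmul_eq_mul, mul_one, mul_neg_one, filter_mem_eq_inter,
    inter_comm F] at *
  omega

end SignVectors

theorem ncard_setOf_card_filter_and_card_filter_not {ι : Type*} [Fintype ι] [DecidableEq ι]
    (p : ι → Prop) [DecidablePred p] (m n : ℕ) :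
    Set.ncard {S : Finset ι | #(S.filter p) = m ∧ #(S.filter (¬p ·)) = n} =
      (#{i : ι | p i}).choose m * (#{i : ι | ¬p i}).choose n := by
  have filter_union_eq {A B : Finset ι} (hA : ∀ x ∈ A, p x) (hB : ∀ x ∈ B, ¬p x) :
      (A ∪ B).filter p = A ∧ (A ∪ B).filter (¬p ·) = B := by
    simp only [filter_union, filter_true_of_mem hA, filter_false_of_mem hB, filter_true_of_mem hB,
      filter_false_of_mem fun x hx => not_not.mpr (hA x hx), union_empty, empty_union, and_self]
  rw [← card_powersetCard, ← card_powersetCard, ← card_product, Set.ncard_eq_toFinset_card',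
    Set.toFinset_ofPred]
  refine card_nbij' (fun S => (S.filter p, S.filter (¬p ·))) (fun AB => AB.1 ∪ AB.2) ?_ ?_ ?_ ?_
  · intro S hS
    simp only [coe_filter, mem_univ, true_and, Set.mem_ofPred_eq] at hS
    simp only [mem_coe, mem_product, mem_powersetCard, hS, and_true]
    constructor <;> intro i <;> simp
  · rintro ⟨A, B⟩ hAB
    simp only [mem_coe, mem_product, mem_powersetCard, subset_iff, mem_filter, mem_univ,
      true_and] at hAB
    obtain ⟨⟨hA, rfl⟩, hB, rfl⟩ := hAB
    simp [filter_union_eq hA hB]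
  · intro S _
    exact filter_union_filter_not_eq (p := p) _
  · rintro ⟨A, B⟩ hAB
    simp only [mem_coe, mem_product, mem_powersetCard, subset_iff, mem_filter, mem_univ,
      true_and] at hAB
    simp [filter_union_eq hAB.1.1 hAB.2.1]

theorem eval_one_X_pow_add_sum {R : Type*} [CommRing R] {d : ℕ} (a : Fin d → R) :
    (X ^ d + ∑ i : Fin d, C (a i) * X ^ (i : ℕ)).eval 1 = 1 + ∑ i, a i := by
  simp [eval_finsetSum]

theorem eval_neg_one_X_pow_add_sum {R : Type*} [CommRing R] {d : ℕ} (a : Fin d → R) :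
    (X ^ d + ∑ i : Fin d, C (a i) * X ^ (i : ℕ)).eval (-1) =
      (-1) ^ d + ∑ i : Fin d, (-1) ^ (i : ℕ) * a i := by
  simp only [eval_add, eval_pow, eval_X, eval_finsetSum, eval_mul, eval_C, mul_comm]

theorem sum_neg_one_pow_mul {R : Type*} [CommRing R] {d : ℕ} (a : Fin d → R) :
    ∑ i : Fin d, (-1) ^ (i : ℕ) * a i =
      ∑ i ∈ {i : Fin d | Even (i : ℕ)}, a i -
        ∑ i ∈ {i : Fin d | ¬Even (i : ℕ)}, a i := by
  rw [← sum_filter_add_sum_filter_not univ (fun i : Fin d => Even (i : ℕ)), sub_eq_add_neg,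
    ← sum_neg_distrib]
  congr 1 <;> refine sum_congr rfl fun i hi => ?_ <;> simp only [mem_filter] at hi
  · simp [hi.2.neg_one_pow]
  · simp [(Nat.not_even_iff_odd.mp hi.2).neg_one_pow]

theorem Fin.card_filter_not_even_val (d : ℕ) : #{i : Fin d | ¬Even (i : ℕ)} = d / 2 := by
  rw [card_filter, Fin.sum_univ_eq_sum_range (fun i => if ¬Even i then 1 else 0), ← card_filter,
    ← Nat.card_multiples d 2]
  congr 1
  refine filter_congr fun i _ => ?_
  rw [← Nat.even_add_one, even_iff_two_dvd]

theorem Fin.card_filter_even_val (d : ℕ) : #{i : Fin d | Even (i : ℕ)} = (d + 1) / 2 := by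
  have := card_filter_add_card_filter_not (s := univ) (fun i : Fin d => Even (i : ℕ))
  rw [Fin.card_filter_not_even_val, card_univ, Fintype.card_fin] at this
  omega

theorem eval_one_and_eval_neg_one_eq_zero_iff {d : ℕ} (hd : d % 4 = 3) (S : Finset (Fin d)) :
    ((X ^ d + ∑ i : Fin d, C (signVec S i) * X ^ (i : ℕ)).eval 1 = 0 ∧
      (X ^ d + ∑ i : Fin d, C (signVec S i) * X ^ (i : ℕ)).eval (-1) = 0) ↔
    #(S.filter (Even ·.val)) = (d + 1) / 4 ∧ #(S.filter (¬Even ·.val)) = (d - 3) / 4 := by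
  have sum_even := sum_signVec {i : Fin d | Even (i : ℕ)} S
  have sum_odd := sum_signVec {i : Fin d | ¬Even (i : ℕ)} S
  rw [inter_filter, inter_univ] at sum_even sum_odd
  rw [eval_one_X_pow_add_sum, eval_neg_one_X_pow_add_sum, sum_neg_one_pow_mul,
    ← sum_filter_add_sum_filter_not univ (fun i : Fin d => Even (i : ℕ)), sum_even, sum_odd,
    Fin.card_filter_even_val, Fin.card_filter_not_even_val,
    (Nat.odd_iff.mpr (by omega)).neg_one_pow]
  omega

/-- For `d ≡ 3 (mod 4)`, the number of tuples in `{1,-1}^d` making both `1`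
and `-1` roots of `x^d + a_{d-1}x^{d-1} + ... + a_0` equals
`C((d+1)/2, (d+1)/4) * C((d-1)/2, (d+1)/4)`. -/
theorem stmt_7 (d : ℕ) (hd : d % 4 = 3) :
    Set.ncard {a : Fin d → ℤ | (∀ i, a i = 1 ∨ a i = -1) ∧
      (X ^ d + ∑ i : Fin d, C (a i) * X ^ (i : ℕ)).eval 1 = 0 ∧
      (X ^ d + ∑ i : Fin d, C (a i) * X ^ (i : ℕ)).eval (-1) = 0} =
    ((d + 1) / 2).choose ((d + 1) / 4) * ((d - 1) / 2).choose ((d + 1) / 4) := by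
  simp_rw [ncard_setOf_pm_one_and, eval_one_and_eval_neg_one_eq_zero_iff hd,
    ncard_setOf_card_filter_and_card_filter_not, Fin.card_filter_even_val,
    Fin.card_filter_not_even_val]
  obtain ⟨k, rfl⟩ : ∃ k, d = 4 * k + 3 := ⟨d / 4, by omega⟩
  rw [show (4 * k + 3 + 1) / 4 = k + 1 by omega, show (4 * k + 3 - 3) / 4 = k by omega,
    show (4 * k + 3) / 2 = 2 * k + 1 by omega, show (4 * k + 3 - 1) / 2 = 2 * k + 1 by omega,
    Nat.choose_symm_half]
end

section
/- For d ≡ 3 (mod 4), the number of tuples (a_0,...,a_{d-1}) ∈ {1,-1}^d such that 1 or -1 is a root of x^d + a_{d-1}x^{d-1} + ... + a_0 equals 2·C(d, (d+1)/2) − C((d+1)/2,(d+1)/4)·C((d-1)/2,(d+1)/4). -/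
open Polynomial Finset

private lemma aux_card_filter_eq (n k : ℕ) :
    Finset.card ((univ : Finset (Finset (Fin n))).filter fun T => Finset.card T = k) = n.choose k := by
  rw [← powerset_univ, ← powersetCard_eq_filter, card_powersetCard, card_univ, Fintype.card_fin]

private lemma aux_sgn_sum {d : ℕ} (T : Finset (Fin d)) :
    ∑ i ∈ T, (-1:ℤ)^(i:ℕ) =
      (Finset.card (T.filter fun i : Fin d => Even (i:ℕ)) : ℤ) - Finset.card (T.filter fun i : Fin d => ¬ Even (i:ℕ)) := by
  rw [← Finset.sum_filter_add_sum_filter_not T (fun i : Fin d => Even (i:ℕ))]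
  rw [Finset.sum_congr rfl (fun i hi => Even.neg_one_pow (mem_filter.mp hi).2),
      Finset.sum_congr rfl
        (fun i hi => Odd.neg_one_pow (Nat.not_even_iff_odd.mp (mem_filter.mp hi).2))]
  simp [mul_comm]
  omega

/-- For `d ≡ 3 (mod 4)`, the number of tuples in `{1,-1}^d` such that `1` or `-1`
is a root of `x^d + a_{d-1}x^{d-1} + ... + a_0` equals
`2·C(d, (d+1)/2) − C((d+1)/2,(d+1)/4)·C((d-1)/2,(d+1)/4)`. -/
theorem stmt_8 (d : ℕ) (hd : d % 4 = 3) :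
    Set.ncard {a : Fin d → ℤ | (∀ i, a i = 1 ∨ a i = -1) ∧
      ((X ^ d + ∑ i : Fin d, C (a i) * X ^ (i : ℕ)).eval 1 = 0 ∨
       (X ^ d + ∑ i : Fin d, C (a i) * X ^ (i : ℕ)).eval (-1) = 0)} =
    2 * d.choose ((d + 1) / 2) -
      ((d + 1) / 2).choose ((d + 1) / 4) * ((d - 1) / 2).choose ((d + 1) / 4) := by
  classical
  have hd2 : d % 2 = 1 := by omega
  have hodd : ¬ Even d := by rw [Nat.even_iff]; omega
  have hneg : ((-1:ℤ))^d = -1 := Odd.neg_one_pow (Nat.odd_iff.mpr hd2)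
  have hsum1 : ∑ i : Fin d, (-1:ℤ)^(i:ℕ) = 1 := by
    rw [Fin.sum_univ_eq_sum_range (fun i => (-1:ℤ)^i), neg_one_geom_sum, if_neg hodd]
  -- Step 1: rewrite the set as a Finset
  have hset : {a : Fin d → ℤ | (∀ i, a i = 1 ∨ a i = -1) ∧
      ((X ^ d + ∑ i : Fin d, C (a i) * X ^ (i : ℕ)).eval 1 = 0 ∨
       (X ^ d + ∑ i : Fin d, C (a i) * X ^ (i : ℕ)).eval (-1) = 0)} =
      ↑((Fintype.piFinset fun _ : Fin d => ({1,-1} : Finset ℤ)).filter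
        (fun a => (∑ i : Fin d, a i = -1) ∨ (∑ i : Fin d, a i * (-1)^(i:ℕ) = 1))) := by
    ext a
    simp only [Set.mem_setOf_eq, Finset.coe_filter, Fintype.mem_piFinset,
      Finset.mem_insert, Finset.mem_singleton, eval_add, eval_pow, eval_X,
      eval_finset_sum, eval_mul, eval_C, one_pow, mul_one, hneg]
    constructor
    · rintro ⟨h1, h2⟩
      refine ⟨h1, ?_⟩
      rcases h2 with h | h
      · left; linarith
      · right; linarith
    · rintro ⟨h1, h2⟩
      refine ⟨h1, ?_⟩
      rcases h2 with h | h
      · left; linarith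
      · right; linarith
  rw [hset, Set.ncard_coe_finset]
  -- Step 2: biject with subsets of Fin d
  set O : Finset (Fin d) := Finset.univ.filter (fun i : Fin d => ¬ Even (i:ℕ)) with hOdef
  set E : Finset (Fin d) := Finset.univ.filter (fun i : Fin d => Even (i:ℕ)) with hEdef
  have hEO : Finset.card E + Finset.card O = d := by
    rw [hEdef, hOdef]
    have := Finset.card_filter_add_card_filter_not
      (s := (Finset.univ : Finset (Fin d))) (fun i : Fin d => Even (i:ℕ))
    simpa only [Finset.card_univ, Fintype.card_fin] using this
  have hEmO : (Finset.card E : ℤ) - Finset.card O = 1 := by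
    rw [hEdef, hOdef]
    have := aux_sgn_sum (Finset.univ : Finset (Fin d))
    rw [hsum1] at this
    omega
  have hE : Finset.card E = (d+1)/2 := by omega
  have hO : Finset.card O = (d-1)/2 := by omega
  -- sum formulas for sign vectors coming from a subset T
  have hA : ∀ T : Finset (Fin d), ∑ i : Fin d, (if i ∈ T then (-1:ℤ) else 1)
      = (d:ℤ) - 2*Finset.card T := by
    intro T
    have h : ∀ i : Fin d, (if i ∈ T then (-1:ℤ) else 1)
        = 1 - (if i ∈ T then (2:ℤ) else 0) := by intro i; split <;> ring
    simp_rw [h, Finset.sum_sub_distrib, Finset.sum_ite_mem, Finset.univ_inter,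
      Finset.sum_const, Finset.card_univ, Fintype.card_fin]
    ring
  have hB : ∀ T : Finset (Fin d), ∑ i : Fin d, (if i ∈ T then (-1:ℤ) else 1) * (-1)^(i:ℕ)
      = 1 - 2 * ∑ i ∈ T, (-1:ℤ)^(i:ℕ) := by
    intro T
    have h : ∀ i : Fin d, (if i ∈ T then (-1:ℤ) else 1) * (-1)^(i:ℕ)
        = (-1)^(i:ℕ) - (if i ∈ T then 2*(-1)^(i:ℕ) else 0) := by intro i; split <;> ring
    simp_rw [h, Finset.sum_sub_distrib, Finset.sum_ite_mem, Finset.univ_inter, hsum1,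
      Finset.mul_sum]
  have hrep : ∀ a : Fin d → ℤ, (∀ i, a i = 1 ∨ a i = -1) →
      ∀ i, a i = if i ∈ Finset.univ.filter (fun j => a j = -1) then -1 else 1 := by
    intro a h1 i
    by_cases h : a i = -1
    · simp [h]
    · simp [h, (h1 i).resolve_right h]
  have hbij : Finset.card ((Fintype.piFinset fun _ : Fin d => ({1,-1} : Finset ℤ)).filter
        (fun a => (∑ i : Fin d, a i = -1) ∨ (∑ i : Fin d, a i * (-1)^(i:ℕ) = 1)))
      = Finset.card ((Finset.univ : Finset (Finset (Fin d))).filter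
        (fun T : Finset (Fin d) => Finset.card T * 2 = d + 1 ∨ ∑ i ∈ T, (-1:ℤ)^(i:ℕ) = 0)) := by
    refine Finset.card_bij' (fun a _ => Finset.univ.filter (fun i => a i = -1))
      (fun T _ => fun i => if i ∈ T then (-1:ℤ) else 1) ?_ ?_ ?_ ?_
    · intro a ha
      simp only [Finset.mem_filter, Fintype.mem_piFinset, Finset.mem_insert,
        Finset.mem_singleton] at ha ⊢
      obtain ⟨h1, h2⟩ := ha
      refine ⟨Finset.mem_univ _, ?_⟩
      have e1 : ∑ i : Fin d, a i = (d:ℤ) - 2*Finset.card (Finset.univ.filter (fun j => a j = -1)) := by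
        rw [Finset.sum_congr rfl (fun i _ => hrep a h1 i)]; exact hA _
      have e2 : ∑ i : Fin d, a i * (-1)^(i:ℕ)
          = 1 - 2 * ∑ i ∈ Finset.univ.filter (fun j => a j = -1), (-1:ℤ)^(i:ℕ) := by
        rw [Finset.sum_congr rfl (fun i _ => by rw [hrep a h1 i])]; exact hB _
      rcases h2 with h | h
      · left; rw [e1] at h; omega
      · right; rw [e2] at h; linarith
    · intro T hT
      simp only [Finset.mem_filter, Finset.mem_univ, true_and] at hT
      simp only [Finset.mem_filter, Fintype.mem_piFinset, Finset.mem_insert,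
        Finset.mem_singleton]
      refine ⟨fun i => by split <;> simp, ?_⟩
      rcases hT with h | h
      · left; rw [hA]; omega
      · right; rw [hB, h]; ring
    · intro a ha
      simp only [Finset.mem_filter, Fintype.mem_piFinset, Finset.mem_insert,
        Finset.mem_singleton] at ha
      funext i
      exact (hrep a ha.1 i).symm
    · intro T _
      ext i
      by_cases h : i ∈ T <;> simp [h]
  rw [hbij]
  clear hbij hset
  -- Step 3: inclusion-exclusion on subsets
  set sP := (Finset.univ : Finset (Finset (Fin d))).filter (fun T : Finset (Fin d) => Finset.card T * 2 = d + 1) with hsP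
  set sQ := (Finset.univ : Finset (Finset (Fin d))).filter
    (fun T : Finset (Fin d) => ∑ i ∈ T, (-1:ℤ)^(i:ℕ) = 0) with hsQ
  have hunion : (Finset.univ : Finset (Finset (Fin d))).filter
      (fun T : Finset (Fin d) => Finset.card T * 2 = d + 1 ∨ ∑ i ∈ T, (-1:ℤ)^(i:ℕ) = 0) = sP ∪ sQ :=
    Finset.filter_or _ _ _
  have hkey := Finset.card_union_add_card_inter sP sQ
  -- card sP
  have hcardP : Finset.card sP = d.choose ((d+1)/2) := by
    rw [hsP, Finset.filter_congr (fun T _ => by omega :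
      ∀ T ∈ (Finset.univ : Finset (Finset (Fin d))), (Finset.card T * 2 = d + 1) ↔ (Finset.card T = (d+1)/2))]
    exact aux_card_filter_eq d ((d+1)/2)
  -- symmDiff card fact
  have hsd : ∀ T : Finset (Fin d), Finset.card (symmDiff T O) + Finset.card (T.filter fun i : Fin d => ¬ Even (i:ℕ))
      = Finset.card (T.filter fun i : Fin d => Even (i:ℕ)) + Finset.card O := by
    intro T
    have e1 : symmDiff T O = (T \ O) ∪ (O \ T) := by
      rw [symmDiff_def]; rfl
    have e2 : Finset.card ((T \ O) ∪ (O \ T)) = Finset.card (T \ O) + Finset.card (O \ T) :=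
      Finset.card_union_of_disjoint (disjoint_sdiff_sdiff)
    have e3 : T \ O = T.filter fun i : Fin d => Even (i:ℕ) := by
      ext i; simp [hOdef, Finset.mem_sdiff, Finset.mem_filter]
    have e4 : O ∩ T = T.filter fun i : Fin d => ¬ Even (i:ℕ) := by
      ext i; simp [hOdef, Finset.mem_inter, Finset.mem_filter, and_comm]
    have e5 := Finset.card_sdiff_add_card_inter O T
    rw [e4] at e5
    rw [e1, e2, e3]
    omega
  -- equivalence for Q
  have hQiff : ∀ T : Finset (Fin d), (∑ i ∈ T, (-1:ℤ)^(i:ℕ) = 0) ↔ Finset.card (symmDiff T O) = (d-1)/2 := by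
    intro T
    rw [aux_sgn_sum T]
    have := hsd T
    omega
  have hcardQ : Finset.card sQ = d.choose ((d+1)/2) := by
    have : Finset.card sQ = Finset.card ((Finset.univ : Finset (Finset (Fin d))).filter fun T => Finset.card T = (d-1)/2) := by
      refine Finset.card_bij' (fun T _ => symmDiff T O) (fun T _ => symmDiff T O) ?_ ?_ ?_ ?_
      · intro T hT
        simp only [hsQ, Finset.mem_filter, Finset.mem_univ, true_and] at hT ⊢
        exact (hQiff T).mp hT
      · intro T hT
        simp only [hsQ, Finset.mem_filter, Finset.mem_univ, true_and] at hT ⊢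
        rw [hQiff, symmDiff_symmDiff_cancel_right]
        exact hT
      · intro T _; exact symmDiff_symmDiff_cancel_right O T
      · intro T _; exact symmDiff_symmDiff_cancel_right O T
    rw [this, aux_card_filter_eq]
    rw [show (d-1)/2 = d - (d+1)/2 by omega]
    exact Nat.choose_symm (by omega)
  -- card of intersection
  have hABsplit : ∀ A B : Finset (Fin d), A ⊆ E → B ⊆ O →
      ((A ∪ B).filter (fun i : Fin d => Even (i:ℕ)) = A ∧
       (A ∪ B).filter (fun i : Fin d => ¬ Even (i:ℕ)) = B) := by
    intro A B hA hB
    have hAe : ∀ i ∈ A, Even (i:ℕ) := fun i hi => (Finset.mem_filter.mp (hA hi)).2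
    have hBo : ∀ i ∈ B, ¬ Even (i:ℕ) := fun i hi => (Finset.mem_filter.mp (hB hi)).2
    constructor <;> ext i <;>
      simp only [Finset.mem_filter, Finset.mem_union] <;> constructor
    · rintro ⟨h | h, he⟩
      · exact h
      · exact absurd he (hBo i h)
    · intro h; exact ⟨Or.inl h, hAe i h⟩
    · rintro ⟨h | h, he⟩
      · exact absurd (hAe i h) he
      · exact h
    · intro h; exact ⟨Or.inr h, hBo i h⟩
  have hcardPQ : Finset.card (sP ∩ sQ) =
      ((d+1)/2).choose ((d+1)/4) * ((d-1)/2).choose ((d+1)/4) := by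
    rw [← Finset.filter_and]
    have hcong : (Finset.univ : Finset (Finset (Fin d))).filter
        (fun T : Finset (Fin d) => Finset.card T * 2 = d + 1 ∧ ∑ i ∈ T, (-1:ℤ)^(i:ℕ) = 0)
        = Finset.univ.filter (fun T : Finset (Fin d) => Finset.card (T.filter fun i : Fin d => Even (i:ℕ)) = (d+1)/4 ∧
            Finset.card (T.filter fun i : Fin d => ¬ Even (i:ℕ)) = (d+1)/4) := by
      apply Finset.filter_congr
      intro T _
      have h1 := aux_sgn_sum T
      have h2 := Finset.card_filter_add_card_filter_not
        (s := T) (fun i : Fin d => Even (i:ℕ))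
      constructor
      · rintro ⟨hc, hs⟩
        rw [h1] at hs
        constructor <;> omega
      · rintro ⟨hc1, hc2⟩
        rw [h1, hc1, hc2]
        constructor
        · omega
        · ring
    rw [hcong]
    have : Finset.card ((Finset.univ : Finset (Finset (Fin d))).filter
        (fun T : Finset (Fin d) => Finset.card (T.filter fun i : Fin d => Even (i:ℕ)) = (d+1)/4 ∧
            Finset.card (T.filter fun i : Fin d => ¬ Even (i:ℕ)) = (d+1)/4))
        = Finset.card ((Finset.powersetCard ((d+1)/4) E) ×ˢ (Finset.powersetCard ((d+1)/4) O)) := by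
      refine Finset.card_bij' (fun T _ => (T.filter fun i : Fin d => Even (i:ℕ),
          T.filter fun i : Fin d => ¬ Even (i:ℕ))) (fun p _ => p.1 ∪ p.2) ?_ ?_ ?_ ?_
      · intro T hT
        simp only [Finset.mem_filter, Finset.mem_univ, true_and] at hT
        rw [Finset.mem_product, Finset.mem_powersetCard, Finset.mem_powersetCard]
        exact ⟨⟨Finset.filter_subset_filter _ (Finset.subset_univ T), hT.1⟩,
               ⟨Finset.filter_subset_filter _ (Finset.subset_univ T), hT.2⟩⟩
      · intro p hp
        rw [Finset.mem_product, Finset.mem_powersetCard, Finset.mem_powersetCard] at hp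
        obtain ⟨⟨hA1, hA2⟩, ⟨hB1, hB2⟩⟩ := hp
        obtain ⟨e1, e2⟩ := hABsplit p.1 p.2 hA1 hB1
        simp only [Finset.mem_filter, Finset.mem_univ, true_and]
        rw [e1, e2]
        exact ⟨hA2, hB2⟩
      · intro T _
        exact Finset.filter_union_filter_not_eq _ T
      · intro p hp
        rw [Finset.mem_product, Finset.mem_powersetCard, Finset.mem_powersetCard] at hp
        obtain ⟨⟨hA1, _⟩, ⟨hB1, _⟩⟩ := hp
        obtain ⟨e1, e2⟩ := hABsplit p.1 p.2 hA1 hB1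
        exact Prod.ext e1 e2
    rw [this, Finset.card_product, Finset.card_powersetCard, Finset.card_powersetCard, hE, hO]
  -- Step 4: put it all together
  rw [hunion]
  have h1 : Finset.card (sP ∪ sQ) + Finset.card (sP ∩ sQ) = Finset.card sP + Finset.card sQ := hkey
  rw [hcardP, hcardQ, hcardPQ] at h1
  omega
end
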